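/- arXiv:1208.0296 — 8 statements merged into one kernel-verified Lean document; each statement's English description precedes it below -/
import Mathlib

section
/- In a Chinese auction with continuous given budgets in which the valuations are symmetric (v_{i,j} = v_j for all players i) and strictly positive, the strategy profile in which each player i allocates x_{i,j} = (v_j/(v_1 + … + v_m))·w_i on each item j is a pure Nash equilibrium. -/
/-!
Each player's winning share `y ↦ y / (y + c)` of an item is concave, so a player's utility is a
concave function of her own bids and a profile satisfying the first-order (KKT) condition is a
best response. At the proportional profile the marginal value `c v_j / X_j ^ 2` of a bid on item
`j` (with column total `X_j = v_j W / S` and opponents' share `c = v_j (W - w_i) / S`) equals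
`(W - w_i) S / W ^ 2` for every item, so no reallocation of the budget can help.
-/

noncomputable def utilSym {n m : ℕ} (v : Fin m → ℝ) (x : Fin n → Fin m → ℝ)
    (i : Fin n) : ℝ :=
  ∑ j, (if 0 < ∑ k, x k j then x i j / (∑ k, x k j) else 0) * v j

open Finset

theorem share_le_tangent {y c d : ℝ} (hy : 0 ≤ y) (hc : 0 ≤ c) (hdc : 0 < d + c) :
    (if 0 < y + c then y / (y + c) else 0) ≤ d / (d + c) + c / (d + c) ^ 2 * (y - d) := by
  split_ifs with h
  · have gap : d / (d + c) + c / (d + c) ^ 2 * (y - d) - y / (y + c)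
        = c * (y - d) ^ 2 / ((d + c) ^ 2 * (y + c)) := by
      field_simp
      ring
    have : 0 ≤ c * (y - d) ^ 2 / ((d + c) ^ 2 * (y + c)) := by positivity
    linarith
  · obtain ⟨rfl, rfl⟩ : y = 0 ∧ c = 0 := ⟨by linarith, by linarith⟩
    simp only [add_zero, zero_div, zero_mul] at hdc ⊢
    exact div_nonneg hdc.le hdc.le

theorem sum_update_apply {ι κ M : Type*} [Fintype ι] [DecidableEq ι] [AddCommGroup M]
    (x : ι → κ → M) (i : ι) (y : κ → M) (j : κ) : ∑ k, Function.update x i y k j = y j + (∑ k, x k j - x i j) := by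
  have : (fun k => Function.update x i y k j) = Function.update (fun k => x k j) i (y j) := by
    ext k
    rcases eq_or_ne k i with rfl | h <;> simp [*]
  rw [this, sum_update_of_mem (mem_univ i), sum_eq_add_sum_sdiff_singleton_of_mem (mem_univ i)]
  abel

theorem utilSym_update_le_of_marginal_eq {n m : ℕ} (v : Fin m → ℝ) (hv : ∀ j, 0 ≤ v j)
    (x : Fin n → Fin m → ℝ) (hx : ∀ k j, 0 ≤ x k j) (htot : ∀ j, 0 < ∑ k, x k j)
    (i : Fin n) (μ : ℝ) (hmarg : ∀ j, (∑ k, x k j - x i j) / (∑ k, x k j) ^ 2 * v j = μ)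
    (y : Fin m → ℝ) (hy : ∀ j, 0 ≤ y j) (hsum : ∑ j, y j = ∑ j, x i j) :
    utilSym v (Function.update x i y) i ≤ utilSym v x i := by
  have hothers : ∀ j, 0 ≤ ∑ k, x k j - x i j := fun j => by
    rw [sub_nonneg]
    exact single_le_sum (fun k _ => hx k j) (mem_univ i)
  have hterm : ∀ j,
      (if 0 < ∑ k, Function.update x i y k j
        then Function.update x i y i j / ∑ k, Function.update x i y k j else 0) * v j
      ≤ x i j / (∑ k, x k j) * v j + μ * (y j - x i j) := fun j => by
    rw [sum_update_apply, Function.update_self, ← hmarg j, mul_right_comm, ← add_mul]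
    refine mul_le_mul_of_nonneg_right ?_ (hv j)
    have h := share_le_tangent (hy j) (hothers j) (d := x i j) (by linarith [htot j])
    rwa [add_sub_cancel] at h
  calc utilSym v (Function.update x i y) i
      ≤ ∑ j, (x i j / (∑ k, x k j) * v j + μ * (y j - x i j)) := sum_le_sum fun j _ => hterm j
    _ = utilSym v x i := by
      rw [sum_add_distrib, ← mul_sum, sum_sub_distrib, hsum, sub_self, mul_zero, add_zero]
      exact sum_congr rfl fun j _ => by rw [if_pos (htot j)]

/-- With symmetric, strictly positive valuations and continuous given
budgets, the profile where each player `i` places `(v j / ∑ v) * w i` on item `j`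
is a pure Nash equilibrium. -/
theorem stmt1 {n m : ℕ} (v : Fin m → ℝ) (hv : ∀ j, 0 < v j)
    (w : Fin n → ℝ) (hw : ∀ i, 0 < w i)
    (x : Fin n → Fin m → ℝ) (hx : ∀ i j, x i j = (v j / ∑ k, v k) * w i) :
    ∀ i : Fin n, ∀ y : Fin m → ℝ, (∀ j, 0 ≤ y j) → (∑ j, y j = w i) →
      utilSym v (Function.update x i y) i ≤ utilSym v x i := by
  intro i y hy hsy
  obtain rfl : x = fun i j => (v j / ∑ k, v k) * w i := funext₂ hx
  have hS : 0 < ∑ k, v k :=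
    sum_pos (fun j _ => hv j) (nonempty_of_sum_ne_zero (hsy ▸ (hw i).ne'))
  have hW : 0 < ∑ k, w k := sum_pos (fun k _ => hw k) ⟨i, mem_univ i⟩
  refine utilSym_update_le_of_marginal_eq v (fun j => (hv j).le) _
    (fun k j => by have := hv j; have := hw k; positivity)
    (fun j => by rw [← mul_sum]; have := hv j; positivity) i
    ((∑ k, w k - w i) * (∑ k, v k) / (∑ k, w k) ^ 2) (fun j => ?_) y hy ?_
  · rw [← mul_sum]
    have := (hv j).ne'
    field_simp
  · rw [hsy, ← sum_mul, ← sum_div, div_self hS.ne', one_mul]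
end

section
/- The two-player, two-item Chinese auction with continuous given budgets in which v_{1,1} = 0, v_{1,2} = 1, v_{2,1} = 1, v_{2,2} = 3 and w_1 = w_2 = 1 has no pure Nash equilibrium. (Hence Chinese auctions with asymmetric valuations and asymmetric continuous budgets need not have a pure Nash equilibrium when some valuations are zero.) -/
/-- Utility of player `i` in a Chinese auction with given budgets and valuations
`v i j`. -/
noncomputable def util {n m : ℕ} (v : Fin n → Fin m → ℝ) (x : Fin n → Fin m → ℝ)
    (i : Fin n) : ℝ :=
  ∑ j, (if 0 < ∑ k, x k j then x i j / (∑ k, x k j) else 0) * v i j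

/-!
Let `a` and `c` be the bids of the two players on the first item, the rest of each unit budget
going to the second. The first player values only the second item, so as long as the second
player bids on it, the first player's only best response is to go all in there (`a = 0`).
Against that, the second player keeps the first item with any positive bid, so halving a
positive `c` strictly helps, while `c = 0` is beaten by the even split. If the second player
bids nothing on the second item (`c = 1`), the even split wins part of the first item plus at
least a third of the second, worth `3`, whereas the current profile yields at most the first
item, worth `1`.
-/

open Set

noncomputable def share (a b : ℝ) : ℝ := if 0 < a + b then a / (a + b) else 0

section Share

variable {a a' b b' : ℝ}

theorem share_of_pos (h : 0 < a + b) : share a b = a / (a + b) := if_pos h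

@[simp]
theorem share_zero_left (b : ℝ) : share 0 b = 0 := by simp [share]

theorem share_zero_right (ha : 0 < a) : share a 0 = 1 := by
  rw [share_of_pos (by simpa using ha), add_zero, div_self ha.ne']

theorem share_pos (ha : 0 < a) (hb : 0 ≤ b) : 0 < share a b := by
  rw [share_of_pos (by linarith)]
  positivity

theorem share_le_one (hb : 0 ≤ b) : share a b ≤ 1 := by
  unfold share
  split_ifs with h
  · rw [div_le_one h]; linarith
  · exact zero_le_one

theorem share_lt_share_left (hb : 0 < b) (ha : 0 ≤ a) (h : a < a') :
    share a b < share a' b := by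
  rw [share_of_pos (by linarith), share_of_pos (by linarith),
    div_lt_div_iff₀ (by linarith) (by linarith)]
  nlinarith

theorem share_le_share_right (ha : 0 < a) (hb : 0 ≤ b) (h : b ≤ b') :
    share a b' ≤ share a b := by
  rw [share_of_pos (by linarith), share_of_pos (by linarith)]
  gcongr

end Share

section TwoPlayers

variable {m : ℕ} (v x : Fin 2 → Fin m → ℝ)

theorem util_zero_eq : util v x 0 = ∑ j, share (x 0 j) (x 1 j) * v 0 j := by
  simp only [util, Fin.sum_univ_two, share]

theorem util_one_eq : util v x 1 = ∑ j, share (x 1 j) (x 0 j) * v 1 j := by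
  simp only [util, Fin.sum_univ_two, share, add_comm (x 0 _)]

end TwoPlayers

def profile (a c : ℝ) : Fin 2 → Fin 2 → ℝ := ![![a, 1 - a], ![c, 1 - c]]

theorem exists_eq_profile {x : Fin 2 → Fin 2 → ℝ} (hx : ∀ i, ∑ j, x i j = 1) :
    ∃ a c, x = profile a c := by
  refine ⟨x 0 0, x 1 0, ?_⟩
  have h0 := hx 0
  have h1 := hx 1
  simp only [Fin.sum_univ_two] at h0 h1
  ext i j
  fin_cases i <;> fin_cases j <;> simp [profile] <;> linarith

theorem update_profile_zero (a c a' : ℝ) :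
    Function.update (profile a c) 0 ![a', 1 - a'] = profile a' c := by
  ext i j
  fin_cases i <;> fin_cases j <;> simp [profile]

theorem update_profile_one (a c c' : ℝ) :
    Function.update (profile a c) 1 ![c', 1 - c'] = profile a c' := by
  ext i j
  fin_cases i <;> fin_cases j <;> simp [profile]

local notation "V" => (![![0, 1], ![1, 3]] : Fin 2 → Fin 2 → ℝ)

theorem util_profile_zero (a c : ℝ) : util V (profile a c) 0 = share (1 - a) (1 - c) := by
  simp [util_zero_eq, Fin.sum_univ_two, profile]

theorem util_profile_one (a c : ℝ) :
    util V (profile a c) 1 = share c a + 3 * share (1 - c) (1 - a) := by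
  simp [util_one_eq, Fin.sum_univ_two, profile, mul_comm]

theorem eq_zero_of_forall_share_le {a c : ℝ} (ha : a ∈ Icc (0 : ℝ) 1) (hc : c < 1)
    (hbest : ∀ a' ∈ Icc (0 : ℝ) 1, share (1 - a') (1 - c) ≤ share (1 - a) (1 - c)) :
    a = 0 := by
  by_contra hne
  have hpos : 0 < a := lt_of_le_of_ne ha.1 (Ne.symm hne)
  have hlt : share (1 - a) (1 - c) < share (1 - 0) (1 - c) :=
    share_lt_share_left (sub_pos.2 hc) (sub_nonneg.2 ha.2) (by linarith)
  exact hlt.not_ge (hbest 0 ⟨le_rfl, zero_le_one⟩)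

theorem no_mutual_best_response {a c : ℝ} (ha : a ∈ Icc (0 : ℝ) 1) (hc : c ∈ Icc (0 : ℝ) 1)
    (hbest₁ : ∀ a' ∈ Icc (0 : ℝ) 1, share (1 - a') (1 - c) ≤ share (1 - a) (1 - c))
    (hbest₂ : ∀ c' ∈ Icc (0 : ℝ) 1,
      share c' a + 3 * share (1 - c') (1 - a) ≤ share c a + 3 * share (1 - c) (1 - a)) :
    False := by
  have half_mem : (1 / 2 : ℝ) ∈ Icc (0 : ℝ) 1 := by norm_num
  rcases hc.2.lt_or_eq with hc1 | rfl
  · obtain rfl := eq_zero_of_forall_share_le ha hc1 hbest₁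
    rcases hc.1.lt_or_eq with hc0 | rfl
    · have hkeep := hbest₂ (c / 2) ⟨by linarith, by linarith⟩
      rw [share_zero_right hc0, share_zero_right (half_pos hc0)] at hkeep
      linarith [share_lt_share_left one_pos (b := 1) (by linarith : (0 : ℝ) ≤ 1 - c)
        (by linarith : 1 - c < 1 - c / 2)]
    · have hsplit := hbest₂ (1 / 2) half_mem
      norm_num [share] at hsplit
  · have hsplit := hbest₂ (1 / 2) half_mem
    have hthird : share (1 / 2) 1 ≤ share (1 / 2) (1 - a) :=
      share_le_share_right (by norm_num) (sub_nonneg.2 ha.2) (sub_le_self _ ha.1)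
    rw [share_of_pos (by norm_num : (0 : ℝ) < 1 / 2 + 1)] at hthird
    rw [sub_self, share_zero_left] at hsplit
    linarith [share_pos (by norm_num : (0 : ℝ) < 1 / 2) ha.1, share_le_one (a := 1) ha.1]

/-- The two-player, two-item Chinese auction with continuous given budgets,
valuations `v₁ = (0,1)`, `v₂ = (1,3)` and budgets `w₁ = w₂ = 1`, has no pure Nash
equilibrium. -/
theorem stmt3 :
    ¬ ∃ x : Fin 2 → Fin 2 → ℝ,
      (∀ i j, 0 ≤ x i j) ∧ (∀ i, ∑ j, x i j = 1) ∧
      (∀ i : Fin 2, ∀ y : Fin 2 → ℝ, (∀ j, 0 ≤ y j) → (∑ j, y j = 1) →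
        util ![![0, 1], ![1, 3]] (Function.update x i y) i ≤
          util ![![0, 1], ![1, 3]] x i) := by
  rintro ⟨x, hnn, hsum, hdev⟩
  obtain ⟨a, c, rfl⟩ := exists_eq_profile hsum
  have hstrategy : ∀ t ∈ Icc (0 : ℝ) 1, (∀ j, 0 ≤ ![t, 1 - t] j) ∧ ∑ j, ![t, 1 - t] j = 1 :=
    fun t ht => ⟨fun j => by fin_cases j <;> simp [ht.1, ht.2], by simp⟩
  refine no_mutual_best_response (a := a) (c := c) ?_ ?_ (fun a' ha' => ?_) (fun c' hc' => ?_)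
  · exact ⟨by simpa [profile] using hnn 0 0, by simpa [profile] using hnn 0 1⟩
  · exact ⟨by simpa [profile] using hnn 1 0, by simpa [profile] using hnn 1 1⟩
  · simpa only [update_profile_zero, util_profile_zero] using
      hdev 0 _ (hstrategy a' ha').1 (hstrategy a' ha').2
  · simpa only [update_profile_one, util_profile_one] using
      hdev 1 _ (hstrategy c' hc').1 (hstrategy c' hc').2
end

section
/- Every Chinese auction with symmetric strictly positive valuations (v_{i,j} = v_j > 0 for all players i) and indivisible budgets, in which each player i has a single indivisible ticket of weight w_i > 0, has a pure Nash equilibrium. Moreover, the assignment produced by the following greedy procedure is such an equilibrium: process the players in decreasing order of ticket weight, and assign the ticket of each player k to an item j maximizing (w_k/(X_j + w_k))·v_j, where X_j is the total weight of tickets already assigned to item j. -/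
/-! Let player `i` sit on item `a` and consider a deviation to `j ≠ a`. Let `t` be the last
player placed on `a`; the load of `a` is then the weight `t` found there plus `w t`. When
`t` was placed it preferred `a` to `j`, i.e. `v j / (X + w t) ≤ v a / load a`, where `X` is
the weight on `j` before `t`. Since all of `X` is still on `j` and `w t ≤ w i`, the ratio
`v j / (w i + weight on j)` that `i` would face is even smaller. Equilibria are
invariant under relabelling the players, so an equilibrium exists: sort the players by
decreasing weight and run the greedy procedure. -/

/-- Utility of player `i` under assignment `s` in a Chinese auction with indivisible
budgets (one ticket of weight `w i` per player) and symmetric valuations `v`. -/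
noncomputable def utilInd {n m : ℕ} (v : Fin m → ℝ) (w : Fin n → ℝ)
    (s : Fin n → Fin m) (i : Fin n) : ℝ :=
  (w i / ∑ k, if s k = s i then w k else 0) * v (s i)

def isPNEInd {n m : ℕ} (v : Fin m → ℝ) (w : Fin n → ℝ) (s : Fin n → Fin m) : Prop :=
  ∀ i : Fin n, ∀ j : Fin m,
    (w i / (w i + ∑ k, if k ≠ i ∧ s k = j then w k else 0)) * v j ≤ utilInd v w s i

/-- Total weight placed on item `j` by the players preceding `k` (in the processing
order) under assignment `s`. -/
noncomputable def prefW {n m : ℕ} (w : Fin n → ℝ) (s : Fin n → Fin m)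
    (k : Fin n) (j : Fin m) : ℝ :=
  ∑ i, if i < k ∧ s i = j then w i else 0

section ChineseAuction

variable {n m : ℕ}

noncomputable def load (w : Fin n → ℝ) (s : Fin n → Fin m) (j : Fin m) : ℝ :=
  ∑ k, if s k = j then w k else 0

noncomputable def othersLoad (w : Fin n → ℝ) (s : Fin n → Fin m) (i : Fin n) (j : Fin m) : ℝ :=
  ∑ k, if k ≠ i ∧ s k = j then w k else 0

def IsGreedyChoice (v : Fin m → ℝ) (w : Fin n → ℝ) (s : Fin n → Fin m) (k : Fin n) : Prop :=
  ∀ j, (w k / (prefW w s k j + w k)) * v j ≤ (w k / (prefW w s k (s k) + w k)) * v (s k)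

lemma isPNEInd_iff (v : Fin m → ℝ) (w : Fin n → ℝ) (s : Fin n → Fin m) :
    isPNEInd v w s ↔
      ∀ i j, (w i / (w i + othersLoad w s i j)) * v j ≤ (w i / load w s (s i)) * v (s i) :=
  Iff.rfl

lemma prefW_nonneg {w : Fin n → ℝ} (hw : ∀ i, 0 ≤ w i) (s : Fin n → Fin m) (k : Fin n)
    (j : Fin m) : 0 ≤ prefW w s k j :=
  Finset.sum_nonneg fun i _ => by split_ifs <;> simp [hw i]

lemma prefW_congr (w : Fin n → ℝ) {s₁ s₂ : Fin n → Fin m} {k : Fin n}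
    (h : ∀ i < k, s₁ i = s₂ i) (j : Fin m) : prefW w s₁ k j = prefW w s₂ k j :=
  Finset.sum_congr rfl fun i _ => by
    by_cases hik : i < k
    · rw [h i hik]
    · simp [hik]

lemma add_othersLoad_self (w : Fin n → ℝ) (s : Fin n → Fin m) (i : Fin n) :
    w i + othersLoad w s i (s i) = load w s (s i) := by
  rw [othersLoad, load, ← Finset.add_sum_erase _ _ (Finset.mem_univ i),
    ← Finset.add_sum_erase _ _ (Finset.mem_univ i), if_neg (fun h => h.1 rfl), if_pos rfl,
    zero_add]
  refine congrArg _ (Finset.sum_congr rfl fun k hk => ?_)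
  simp [Finset.ne_of_mem_erase hk]

lemma load_eq_prefW_add {w : Fin n → ℝ} {s : Fin n → Fin m} {t : Fin n} {a : Fin m}
    (hta : s t = a) (hlast : ∀ k, s k = a → k ≤ t) :
    load w s a = prefW w s t a + w t := by
  subst hta
  rw [load, prefW, ← Finset.sum_erase_add _ _ (Finset.mem_univ t), if_pos rfl,
    ← Finset.sum_erase_add _ _ (Finset.mem_univ t), if_neg (fun h => lt_irrefl t h.1),
    add_zero]
  refine congrArg (· + w t) (Finset.sum_congr rfl fun k hk => ?_)
  have hkt : k ≠ t := Finset.ne_of_mem_erase hk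
  by_cases hks : s k = s t
  · simp [hks, lt_of_le_of_ne (hlast k hks) hkt]
  · simp [hks]

lemma prefW_le_othersLoad {w : Fin n → ℝ} (hw : ∀ i, 0 ≤ w i) {s : Fin n → Fin m}
    {i : Fin n} {j : Fin m} (hj : s i ≠ j) (t : Fin n) :
    prefW w s t j ≤ othersLoad w s i j :=
  Finset.sum_le_sum (f := fun k => if k < t ∧ s k = j then w k else 0) fun k _ => by
    by_cases hk : k < t ∧ s k = j
    · have hki : k ≠ i := by rintro rfl; exact hj hk.2
      simp [hk, hki]
    · rw [if_neg hk]
      split_ifs <;> simp [hw k]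

lemma exists_last_on_item (s : Fin n → Fin m) (i : Fin n) :
    ∃ t, s t = s i ∧ i ≤ t ∧ ∀ k, s k = s i → k ≤ t := by
  obtain ⟨t, ht, hmax⟩ :=
    (Finset.univ.filter fun k => s k = s i).exists_max_image id ⟨i, by simp⟩
  simp only [Finset.mem_filter, Finset.mem_univ, true_and, id] at ht hmax
  exact ⟨t, ht, hmax i rfl, hmax⟩

lemma IsGreedyChoice.congr {v : Fin m → ℝ} {w : Fin n → ℝ} {s₁ s₂ : Fin n → Fin m}
    {k : Fin n} (h : ∀ i ≤ k, s₁ i = s₂ i) (hg : IsGreedyChoice v w s₁ k) :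
    IsGreedyChoice v w s₂ k := by
  intro j
  simpa only [← prefW_congr w (fun i hi => h i hi.le), h k le_rfl] using hg j

lemma exists_forall_isGreedyChoice [NeZero m] (v : Fin m → ℝ) (w : Fin n → ℝ) :
    ∃ s : Fin n → Fin m, ∀ k, IsGreedyChoice v w s k := by
  suffices ∀ r ≤ n, ∃ s : Fin n → Fin m, ∀ k : Fin n, (k : ℕ) < r → IsGreedyChoice v w s k by
    obtain ⟨s, hs⟩ := this n le_rfl
    exact ⟨s, fun k => hs k k.2⟩
  intro r hr
  induction r with
  | zero => exact ⟨fun _ => 0, fun k hk => absurd hk (Nat.not_lt_zero _)⟩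
  | succ r ih =>
    obtain ⟨s, hs⟩ := ih (by omega)
    set K : Fin n := ⟨r, hr⟩
    obtain ⟨a, ha⟩ := Finite.exists_max fun j => (w K / (prefW w s K j + w K)) * v j
    refine ⟨Function.update s K a, fun k hk => ?_⟩
    rcases Nat.lt_succ_iff_lt_or_eq.1 hk with hk | hk
    · exact (hs k hk).congr fun i hi =>
        (Function.update_of_ne (Fin.ne_of_lt (lt_of_le_of_lt hi hk)) _ _).symm
    · obtain rfl : k = K := Fin.ext hk
      have hpref : ∀ j, prefW w (Function.update s K a) K j = prefW w s K j :=
        prefW_congr w fun i hi => Function.update_of_ne (Fin.ne_of_lt hi) a s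
      intro j
      simpa only [IsGreedyChoice, hpref, Function.update_self] using ha j

lemma isPNEInd_of_isGreedyChoice {v : Fin m → ℝ} (hv : ∀ j, 0 ≤ v j) {w : Fin n → ℝ}
    (hw : ∀ i, 0 < w i) (hanti : Antitone w) {s : Fin n → Fin m}
    (hg : ∀ k, IsGreedyChoice v w s k) : isPNEInd v w s := by
  have hw₀ : ∀ i, 0 ≤ w i := fun i => (hw i).le
  rw [isPNEInd_iff]
  intro i j
  by_cases hj : s i = j
  · subst hj
    rw [add_othersLoad_self]
  obtain ⟨t, hts, hit, hlast⟩ := exists_last_on_item s i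
  have hload := load_eq_prefW_add (w := w) hts hlast
  have hX := prefW_nonneg hw₀ s t j
  have hXY := prefW_le_othersLoad hw₀ hj t
  have hgt := hg t j
  rw [hts, ← hload] at hgt
  have hratio : v j / (prefW w s t j + w t) ≤ v (s i) / load w s (s i) := by
    refine le_of_mul_le_mul_left ?_ (hw t)
    calc w t * (v j / (prefW w s t j + w t)) = w t / (prefW w s t j + w t) * v j := by ring
      _ ≤ w t / load w s (s i) * v (s i) := hgt
      _ = w t * (v (s i) / load w s (s i)) := by ring
  have hwt := hanti hit
  calc w i / (w i + othersLoad w s i j) * v j = w i * (v j / (w i + othersLoad w s i j)) := by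
        ring
    _ ≤ w i * (v j / (prefW w s t j + w t)) :=
        mul_le_mul_of_nonneg_left
          (div_le_div_of_nonneg_left (hv j) (by linarith [hw t]) (by linarith)) (hw₀ i)
    _ ≤ w i * (v (s i) / load w s (s i)) := by gcongr; exact hw₀ i
    _ = w i / load w s (s i) * v (s i) := by ring

lemma load_comp_perm (w : Fin n → ℝ) (s : Fin n → Fin m) (σ : Equiv.Perm (Fin n)) :
    load (w ∘ σ) (s ∘ σ) = load w s :=
  funext fun j => Equiv.sum_comp σ fun k => if s k = j then w k else 0

lemma othersLoad_comp_perm (w : Fin n → ℝ) (s : Fin n → Fin m) (σ : Equiv.Perm (Fin n))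
    (i : Fin n) (j : Fin m) : othersLoad (w ∘ σ) (s ∘ σ) i j = othersLoad w s (σ i) j := by
  rw [othersLoad, othersLoad, ← Equiv.sum_comp σ fun k => if k ≠ σ i ∧ s k = j then w k else 0]
  simp

lemma isPNEInd.of_comp_perm {v : Fin m → ℝ} {w : Fin n → ℝ} {s : Fin n → Fin m}
    (σ : Equiv.Perm (Fin n)) (h : isPNEInd v (w ∘ σ) (s ∘ σ)) : isPNEInd v w s := by
  rw [isPNEInd_iff] at h ⊢
  intro i j
  simpa only [load_comp_perm, othersLoad_comp_perm, Function.comp_apply,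
    Equiv.apply_symm_apply] using h (σ.symm i) j

end ChineseAuction

/-- Every Chinese auction with symmetric strictly positive valuations and
indivisible budgets has a pure Nash equilibrium; moreover, if the players are processed
in decreasing order of ticket weight and each player `k` is assigned to an item
maximizing `(w k / (X_j + w k)) * v j` (where `X_j` is the weight already on item `j`),
the resulting assignment is a pure Nash equilibrium. -/
theorem stmt8 {n m : ℕ} (hm : 0 < m)
    (v : Fin m → ℝ) (hv : ∀ j, 0 < v j)
    (w : Fin n → ℝ) (hw : ∀ i, 0 < w i) :
    (∃ s : Fin n → Fin m, isPNEInd v w s) ∧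
    (∀ s : Fin n → Fin m,
      (∀ i i' : Fin n, i ≤ i' → w i' ≤ w i) →
      (∀ k : Fin n, ∀ j : Fin m,
        (w k / (prefW w s k j + w k)) * v j ≤
          (w k / (prefW w s k (s k) + w k)) * v (s k)) →
      isPNEInd v w s) := by
  have : NeZero m := ⟨hm.ne'⟩
  have hv₀ : ∀ j, 0 ≤ v j := fun j => (hv j).le
  refine ⟨?_, fun s hanti hg => isPNEInd_of_isGreedyChoice hv₀ hw hanti hg⟩
  obtain ⟨σ, hσ⟩ : ∃ σ : Equiv.Perm (Fin n), Antitone (w ∘ σ) :=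
    ⟨Tuple.sort (OrderDual.toDual ∘ w), monotone_toDual_comp_iff.1 (Tuple.monotone_sort _)⟩
  obtain ⟨s, hs⟩ := exists_forall_isGreedyChoice v (w ∘ σ)
  refine ⟨s ∘ σ.symm, isPNEInd.of_comp_perm σ ?_⟩
  rw [Function.comp_assoc, Equiv.symm_comp_self, Function.comp_id]
  exact isPNEInd_of_isGreedyChoice hv₀ (fun i => hw (σ i)) hσ hs
end

section
/- Every Chinese auction with two items, arbitrary strictly positive (possibly asymmetric) valuations v_{i,1}, v_{i,2} > 0, and asymmetric indivisible budgets, in which each player i has a single indivisible ticket of weight w_i > 0, has a pure Nash equilibrium. -/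
/-!
Put the players on item `1` exactly when they belong to a set `S` of total weight `X`,
and let `T` be the total weight. Cross-multiplying, nobody on item `1` wants to move iff
`X ≤ aᵢ` and nobody on item `0` wants to move iff `aᵢ ≤ X + wᵢ`, where
`aᵢ = vᵢ₁ (T + wᵢ) / (vᵢ₀ + vᵢ₁)`. Such an `S` is found greedily: go through the players
in order of decreasing `aᵢ` and take a player whenever the accumulated weight, including
its own, does not exceed its threshold.
-/

open Finset

/-- Utility of player `i` under assignment `s` in a Chinese auction with two items,
indivisible budgets (one ticket of weight `w i` per player) and valuations `v i j`. -/
noncomputable def utilInd2 {n : ℕ} (v : Fin n → Fin 2 → ℝ) (w : Fin n → ℝ)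
    (s : Fin n → Fin 2) (i : Fin n) : ℝ :=
  (w i / ∑ k, if s k = s i then w k else 0) * v i (s i)

theorem exists_threshold_split {α : Type*} [DecidableEq α] (a w : α → ℝ)
    (hw : ∀ i, 0 ≤ w i) (F : Finset α) (c : ℝ) :
    ∃ S ⊆ F, (∀ i ∈ S, c + ∑ k ∈ S, w k ≤ a i) ∧
      ∀ i ∈ F, i ∉ S → a i ≤ c + ∑ k ∈ S, w k + w i := by
  -- `c` is the weight already taken; the player with the largest threshold is decided first.
  induction F using Finset.induction_on_max_value a generalizing c with
  | empty => exact ⟨∅, by simp⟩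
  | insert i₀ F hi₀ hmax ih =>
    by_cases hc : c + w i₀ ≤ a i₀
    · obtain ⟨S, hSF, hin, hout⟩ := ih (c + w i₀)
      have hi₀S : i₀ ∉ S := fun h => hi₀ (hSF h)
      refine ⟨insert i₀ S, insert_subset_insert i₀ hSF, ?_, ?_⟩
      · rw [sum_insert hi₀S]
        intro i hi
        rcases mem_insert.mp hi with rfl | hi
        · rcases S.eq_empty_or_nonempty with rfl | ⟨j, hj⟩
          · simpa using hc
          · linarith [hin j hj, hmax j (hSF hj)]
        · linarith [hin i hi]
      · rw [sum_insert hi₀S]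
        intro i hiF hiS
        rw [mem_insert, not_or] at hiS
        have := hout i ((mem_insert.mp hiF).resolve_left hiS.1) hiS.2
        linarith
    · obtain ⟨S, hSF, hin, hout⟩ := ih c
      refine ⟨S, hSF.trans (subset_insert i₀ F), hin, fun i hiF hiS => ?_⟩
      rcases mem_insert.mp hiF with rfl | hiF
      · linarith [sum_nonneg fun k (_ : k ∈ S) => hw k]
      · exact hout i hiF hiS

noncomputable def itemLoad {ι β : Type*} [Fintype ι] [DecidableEq β] (w : ι → ℝ)
    (s : ι → β) (j : β) : ℝ :=
  ∑ k, if s k = j then w k else 0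

section Load

variable {ι β : Type*} [Fintype ι] [DecidableEq ι] [DecidableEq β] (w : ι → ℝ) (s : ι → β)

theorem itemLoad_eq_add_sum_ne (i : ι) (j : β) :
    itemLoad w s j = (if s i = j then w i else 0) + ∑ k, if k ≠ i ∧ s k = j then w k else 0 := by
  rw [itemLoad, ← add_sum_erase univ _ (mem_univ i), ← sum_filter, ← sum_filter]
  congr 2
  ext k
  simp

omit [DecidableEq ι] in
theorem single_le_itemLoad (hw : ∀ i, 0 ≤ w i) (i : ι) : w i ≤ itemLoad w s (s i) := by
  simpa [itemLoad] using single_le_sum (f := fun k => if s k = s i then w k else 0)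
    (fun k _ => by split_ifs <;> simp [hw k]) (mem_univ i)

end Load

theorem div_mul_le_div_mul_of_mul_le {w L L' v v' : ℝ} (hw : 0 < w) (hL : 0 < L) (hL' : 0 ≤ L')
    (h : L * v' ≤ v * (w + L')) : w / (w + L') * v' ≤ w / L * v := by
  rw [div_mul_eq_mul_div, div_mul_eq_mul_div, div_le_div_iff₀ (by linarith) hL]
  nlinarith [mul_le_mul_of_nonneg_left h hw.le]

theorem le_utilInd2_of_mul_le {n : ℕ} (v : Fin n → Fin 2 → ℝ) {w : Fin n → ℝ}
    (hw : ∀ i, 0 < w i) (s : Fin n → Fin 2) (i : Fin n) (j : Fin 2)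
    (h : j ≠ s i → itemLoad w s (s i) * v i j ≤ v i (s i) * (w i + itemLoad w s j)) :
    (w i / (w i + ∑ k, if k ≠ i ∧ s k = j then w k else 0)) * v i j ≤ utilInd2 v w s i := by
  have hload := itemLoad_eq_add_sum_ne w s i j
  by_cases hj : j = s i
  · subst hj
    simp only [if_true] at hload
    rw [utilInd2, ← hload]
    rfl
  · rw [if_neg (Ne.symm hj), zero_add] at hload
    rw [← hload]
    refine div_mul_le_div_mul_of_mul_le (hw i) ?_ ?_ (h hj)
    · exact (hw i).trans_le (single_le_itemLoad w s (fun k => (hw k).le) i)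
    · exact sum_nonneg fun k _ => by split_ifs <;> simp [(hw k).le]

/-- Every Chinese auction with two items, strictly positive (possibly
asymmetric) valuations, and asymmetric indivisible budgets (one ticket of weight
`w i > 0` per player) has a pure Nash equilibrium. -/
theorem stmt10 {n : ℕ} (v : Fin n → Fin 2 → ℝ) (hv : ∀ i j, 0 < v i j)
    (w : Fin n → ℝ) (hw : ∀ i, 0 < w i) :
    ∃ s : Fin n → Fin 2,
      ∀ i : Fin n, ∀ j : Fin 2,
        (w i / (w i + ∑ k, if k ≠ i ∧ s k = j then w k else 0)) * v i j ≤
          utilInd2 v w s i := by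
  set T := ∑ k, w k
  obtain ⟨S, -, hin, hout⟩ := exists_threshold_split
    (fun i => v i 1 * (T + w i) / (v i 0 + v i 1)) w (fun i => (hw i).le) univ 0
  let s : Fin n → Fin 2 := fun i => if i ∈ S then 1 else 0
  have hload₁ : itemLoad w s 1 = ∑ k ∈ S, w k := by
    rw [itemLoad, ← sum_filter]
    congr 1
    ext k
    simp [s]
  have hload₀ : itemLoad w s 0 = T - ∑ k ∈ S, w k := by
    rw [itemLoad, ← sum_filter, eq_sub_iff_add_eq, add_comm]
    convert sum_add_sum_compl S w using 3
    ext k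
    simp [s]
  refine ⟨s, fun i j => le_utilInd2_of_mul_le v hw s i j fun hj => ?_⟩
  have hv₀ := hv i 0
  have hv₁ := hv i 1
  by_cases hi : i ∈ S
  · have hsi : s i = 1 := if_pos hi
    obtain rfl : j = 0 := by omega
    have hstay := (le_div_iff₀ (by linarith)).mp (zero_add (∑ k ∈ S, w k) ▸ hin i hi)
    rw [hsi, hload₀, hload₁]
    linarith
  · have hsi : s i = 0 := if_neg hi
    obtain rfl : j = 1 := by omega
    have hstay := (div_le_iff₀ (by linarith)).mp (zero_add (∑ k ∈ S, w k) ▸ hout i (mem_univ i) hi)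
    rw [hsi, hload₀, hload₁]
    linarith
end

section
/- Every Chinese auction with arbitrary (possibly asymmetric) nonnegative valuations and symmetric indivisible budgets, in which each player has a single indivisible ticket of weight 1, has a pure Nash equilibrium. That is, for any n players, m items, and valuations v_{i,j} ≥ 0, there is an assignment s of players to items such that for every player i and every item j, v_{i,j}/(1 + n_j(s)) ≤ v_{i,s_i}/n_{s_i}(s), where n_j(s) is the number of players assigned to item j. -/
/-!
Taking logarithms makes the game an exact potential game: when player `i` moves from item `b`
to item `a`, the quantity `∑ᵢ log v i (s i) - ∑ⱼ log (n_j(s))!` changes by exactly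
`log (v i a / (n_a + 1)) - log (v i b / n_b)`. Zero valuations (where `log 0 = 0` is junk) are
dealt with by comparing potentials lexicographically after the number of players with positive
value: moving away from a worthless item increases that number. A maximizer of this potential
over the finitely many assignments is a pure Nash equilibrium.
-/

open Finset Function Real
open scoped Nat

namespace ChineseAuction

variable {ι α : Type*} [Fintype ι]

lemma sum_apply_update_add [DecidableEq ι] {M : Type*} [AddCommMonoid M] (g : ι → α → M)
    (s : ι → α) (i : ι) (j : α) :
    ∑ k, g k (update s i j k) + g i (s i) = ∑ k, g k (s k) + g i j := by
  rw [← add_sum_erase _ _ (mem_univ i), ← add_sum_erase _ _ (mem_univ i), update_self,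
    sum_congr rfl fun k hk => by rw [update_of_ne (ne_of_mem_erase hk)]]
  abel

variable [DecidableEq α]

def load (s : ι → α) (j : α) : ℕ := #{k | s k = j}

lemma load_apply_pos (s : ι → α) (i : ι) : 0 < load s (s i) :=
  card_pos.mpr ⟨i, by simp⟩

variable [DecidableEq ι] {s : ι → α} {i : ι} {j : α}

lemma load_update_self (h : s i ≠ j) : load (update s i j) j = load s j + 1 := by
  have : filter (fun k => update s i j k = j) univ = insert i (filter (fun k => s k = j) univ) := by
    ext k
    rcases eq_or_ne k i with rfl | hk <;> simp [*]
  rw [load, this, card_insert_of_notMem (by simpa using h)]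
  rfl

lemma load_update_apply_add_one (h : s i ≠ j) : load (update s i j) (s i) + 1 = load s (s i) := by
  have : filter (fun k => update s i j k = s i) univ =
      (filter (fun k => s k = s i) univ).erase i := by
    ext k
    rcases eq_or_ne k i with rfl | hk <;> simp [*, Ne.symm h]
  rw [load, this, card_erase_add_one (by simp)]
  rfl

lemma load_update_of_ne {l : α} (hj : l ≠ j) (hi : l ≠ s i) :
    load (update s i j) l = load s l := by
  unfold load
  congr 1
  ext k
  rcases eq_or_ne k i with rfl | hk <;> simp [*, Ne.symm hj, Ne.symm hi]

lemma _root_.Real.log_factorial_succ (n : ℕ) : log (n + 1)! = log (n + 1) + log n ! := by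
  rw [Nat.factorial_succ, Nat.cast_mul, log_mul (by positivity) (by positivity)]
  push_cast
  ring

variable [Fintype α]

noncomputable def congestion (s : ι → α) : ℝ := ∑ l, log (load s l)!

lemma congestion_update (h : s i ≠ j) :
    congestion (update s i j) + log (load s (s i)) = congestion s + log (load s j + 1) := by
  have hdiff : ∑ l, (log (load (update s i j) l)! - log (load s l)!) =
      log (load s j + 1) + -log (load s (s i)) := by
    refine Fintype.sum_eq_add j (s i) h.symm ?_ |>.trans ?_
    · rintro l ⟨hj, hi⟩
      rw [load_update_of_ne hj hi, sub_self]
    · obtain ⟨c, hc⟩ : ∃ c, load s (s i) = c + 1 :=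
        ⟨_, (Nat.succ_pred_eq_of_pos (load_apply_pos s i)).symm⟩
      have hc' : load (update s i j) (s i) = c := by have := load_update_apply_add_one h; omega
      rw [load_update_self h, hc', hc, log_factorial_succ, log_factorial_succ]
      push_cast
      ring
  rw [sum_sub_distrib] at hdiff
  unfold congestion
  linarith

noncomputable def potential (v : ι → α → ℝ) (s : ι → α) : ℕ ×ₗ ℝ :=
  toLex (#{k | 0 < v k (s k)}, ∑ k, log (v k (s k)) - congestion s)

lemma potential_lt_update {v : ι → α → ℝ} (hv : ∀ k x, 0 ≤ v k x)
    (h : v i (s i) / load s (s i) < v i j / (load s j + 1)) :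
    potential v s < potential v (update s i j) := by
  have hB : (0 : ℝ) < load s (s i) := by exact_mod_cast load_apply_pos s i
  have hA : (0 : ℝ) < load s j + 1 := by positivity
  have hij : s i ≠ j := by
    rintro rfl
    exact h.not_ge (div_le_div_of_nonneg_left (hv _ _) hB (by linarith))
  have ha : 0 < v i j :=
    (div_pos_iff_of_pos_right hA).mp ((div_nonneg (hv i (s i)) hB.le).trans_lt h)
  have hcount := sum_apply_update_add (fun k x => if 0 < v k x then 1 else 0) s i j
  have hlog := sum_apply_update_add (fun k x => log (v k x)) s i j
  have hcong := congestion_update hij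
  rw [potential, potential, Prod.Lex.toLex_lt_toLex, card_filter, card_filter]
  rcases (hv i (s i)).eq_or_lt with hb | hb
  · left
    simp only [← hb, lt_irrefl, if_false, ha, if_true] at hcount
    omega
  · right
    refine ⟨by simpa [hb, ha] using hcount.symm, ?_⟩
    have hgain := log_lt_log (div_pos hb hB) h
    rw [log_div hb.ne' hB.ne', log_div ha.ne' hA.ne'] at hgain
    linarith

end ChineseAuction

/-- Every Chinese auction with arbitrary nonnegative (possibly
asymmetric) valuations and symmetric indivisible budgets (each player has one ticket
of weight 1) has a pure Nash equilibrium: there is an assignment `s` of players to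
items such that for every player `i` and item `j`,
`v i j / (n_j(s) + 1) ≤ v i (s i) / n_{s i}(s)`, where `n_j(s)` is the number of
players assigned to item `j`. -/
theorem stmt11 {n m : ℕ} (hm : 0 < m)
    (v : Fin n → Fin m → ℝ) (hv : ∀ i j, 0 ≤ v i j) :
    ∃ s : Fin n → Fin m,
      ∀ i : Fin n, ∀ j : Fin m,
        v i j / (((Finset.univ.filter fun k => s k = j).card : ℝ) + 1) ≤
          v i (s i) / ((Finset.univ.filter fun k => s k = s i).card : ℝ) := by
  have : Nonempty (Fin m) := ⟨⟨0, hm⟩⟩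
  obtain ⟨s, hs⟩ := Finite.exists_max (ChineseAuction.potential v)
  exact ⟨s, fun i j => not_lt.mp fun hdev =>
    (hs _).not_gt (ChineseAuction.potential_lt_update hv hdev)⟩
end

section
/- In a Chinese auction with costly continuous budgets and symmetric strictly positive valuations (v_{i,j} = v_j > 0 for all players i), the strategy profile in which every player i allocates x_{i,j} = ((n−1)/n²)·v_j on each item j is a symmetric pure Nash equilibrium: no player can strictly increase their utility by deviating to any other nonnegative allocation vector y ∈ ℝ_{≥0}^m. -/
/-!
The auction splits into independent Tullock contests, one per item. Against opponents' total
bid `S > 0` on an item of value `V`, the payoff `y ↦ y / (y + S) * V - y` is maximised where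
`(y + S)² = S V`: if `z` satisfies this, the payoff at `y` falls short of that at `z` by exactly
`(y - z)² / (y + S)`. In the symmetric profile `S = (n - 1)² V / n²`, and the bid
`(n - 1) V / n²` satisfies this condition.
-/

/-- Utility of player `i` in a Chinese auction with costly continuous budgets and
symmetric valuations `v : Fin m → ℝ`: expected value won minus the weight spent. -/
noncomputable def cutilSym {n m : ℕ} (v : Fin m → ℝ) (x : Fin n → Fin m → ℝ)
    (i : Fin n) : ℝ :=
  ∑ j, ((if 0 < ∑ k, x k j then x i j / (∑ k, x k j) else 0) * v j - x i j)

noncomputable def contestPayoff (V own others : ℝ) : ℝ :=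
  (if 0 < own + others then own / (own + others) else 0) * V - own

lemma cutilSym_eq_sum_contestPayoff {n m : ℕ} (v : Fin m → ℝ) (x : Fin n → Fin m → ℝ)
    (i : Fin n) :
    cutilSym v x i = ∑ j, contestPayoff (v j) (x i j) (∑ k ∈ Finset.univ.erase i, x k j) := by
  refine Finset.sum_congr rfl fun j _ => ?_
  rw [contestPayoff, Finset.add_sum_erase _ (fun k => x k j) (Finset.mem_univ i)]

lemma contestPayoff_le_of_sq_eq {V S y z : ℝ} (hS : 0 < S) (hy : 0 ≤ y) (hz : 0 ≤ z)
    (hopt : (z + S) ^ 2 = S * V) :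
    contestPayoff V y S ≤ contestPayoff V z S := by
  have hyS : 0 < y + S := by linarith
  have hzS : 0 < z + S := by linarith
  simp only [contestPayoff, if_pos hyS, if_pos hzS]
  have hgap : z / (z + S) * V - z - (y / (y + S) * V - y) = (y - z) ^ 2 / (y + S) := by
    field_simp
    linear_combination (y - z) * hopt
  linarith [div_nonneg (sq_nonneg (y - z)) hyS.le]

lemma Fin.sum_univ_erase_const {n : ℕ} (i : Fin n) (c : ℝ) :
    ∑ _k ∈ Finset.univ.erase i, c = ((n : ℝ) - 1) * c := by
  rw [Finset.sum_const, Finset.card_erase_of_mem (Finset.mem_univ i), Finset.card_univ,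
    Fintype.card_fin, nsmul_eq_mul, Nat.cast_pred (Fin.pos i)]

/-- In a Chinese auction with costly continuous budgets and symmetric
strictly positive valuations, the profile in which every player allocates
`((n-1)/n²) * v j` on each item `j` is a symmetric pure Nash equilibrium: no player
can strictly increase their utility by deviating to any other nonnegative allocation. -/
theorem stmt12 {n m : ℕ} (hn : 2 ≤ n)
    (v : Fin m → ℝ) (hv : ∀ j, 0 < v j)
    (x : Fin n → Fin m → ℝ)
    (hx : ∀ i j, x i j = (((n : ℝ) - 1) / (n : ℝ) ^ 2) * v j) :
    ∀ i : Fin n, ∀ y : Fin m → ℝ, (∀ j, 0 ≤ y j) →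
      cutilSym v (Function.update x i y) i ≤ cutilSym v x i := by
  intro i y hy
  have hn1 : (0 : ℝ) < n - 1 := by
    have : (2 : ℝ) ≤ n := by exact_mod_cast hn
    linarith
  have hothers : ∀ j, ∑ k ∈ Finset.univ.erase i, Function.update x i y k j
      = ∑ k ∈ Finset.univ.erase i, x k j :=
    fun j => Finset.sum_congr rfl fun k hk => by
      rw [Function.update_of_ne (Finset.ne_of_mem_erase hk)]
  rw [cutilSym_eq_sum_contestPayoff, cutilSym_eq_sum_contestPayoff]
  refine Finset.sum_le_sum fun j _ => ?_
  rw [hothers, Function.update_self, Finset.sum_congr rfl fun k _ => hx k j,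
    Fin.sum_univ_erase_const, hx i j]
  have hvj := hv j
  refine contestPayoff_le_of_sq_eq (by positivity) (hy j) (by positivity) ?_
  field_simp
  ring
end

section
/- The two-player, two-item Chinese auction with costly continuous budgets in which v_{1,1} = 1, v_{1,2} = 0, v_{2,1} = 1, v_{2,2} = 1 has no pure Nash equilibrium. (Hence Chinese auctions with asymmetric valuations and costly continuous budgets need not have a pure Nash equilibrium when some valuations are zero.) -/
/-- Utility of player `i` in a Chinese auction with costly continuous budgets:
expected value won minus the weight spent. -/
noncomputable def cutil {n m : ℕ} (v : Fin n → Fin m → ℝ) (x : Fin n → Fin m → ℝ)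
    (i : Fin n) : ℝ :=
  ∑ j, ((if 0 < ∑ k, x k j then x i j / (∑ k, x k j) else 0) * v i j - x i j)

/-!
Utilities are separable over items, so a player may deviate on one item alone. A player who
values an item at `0` only loses by bidding on it, so in equilibrium bids nothing there. A player
who values an item positively and faces no competition on it has no best reply: a bid `b > 0`
wins the item for `b`, and `b / 2` wins it for less. In the auction at hand player `0` values
item `1` at `0` and player `1` values it at `1`, so these two facts contradict each other.
-/

open Finset Function

/-- The payoff on a single item of bidding `b` when the other players bid `s` in total. -/
noncomputable def bidPayoff (val s b : ℝ) : ℝ :=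
  (if 0 < b + s then b / (b + s) else 0) * val - b

lemma bidPayoff_zero_left (s b : ℝ) : bidPayoff 0 s b = -b := by
  simp [bidPayoff]

lemma bidPayoff_uncontested_of_pos {val b : ℝ} (hb : 0 < b) : bidPayoff val 0 b = val - b := by
  simp [bidPayoff, hb, hb.ne']

lemma exists_bidPayoff_uncontested_gt {val b : ℝ} (hval : 0 < val) (hb : 0 ≤ b) :
    ∃ t, 0 ≤ t ∧ bidPayoff val 0 b < bidPayoff val 0 t := by
  rcases hb.eq_or_lt with rfl | hb
  · refine ⟨val / 2, by positivity, ?_⟩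
    rw [bidPayoff_uncontested_of_pos (half_pos hval)]
    simp only [bidPayoff, add_zero, lt_irrefl, if_false, zero_mul, sub_zero]
    linarith
  · refine ⟨b / 2, by positivity, ?_⟩
    rw [bidPayoff_uncontested_of_pos hb, bidPayoff_uncontested_of_pos (half_pos hb)]
    linarith

section Auction

variable {n m : ℕ} (v : Fin n → Fin m → ℝ)

def IsPureNashEq (x : Fin n → Fin m → ℝ) : Prop :=
  (∀ i j, 0 ≤ x i j) ∧
    ∀ i y, (∀ j, 0 ≤ y j) → cutil v (update x i y) i ≤ cutil v x i

lemma sum_erase_update_apply (x : Fin n → Fin m → ℝ) (i : Fin n) (y : Fin m → ℝ) (j : Fin m) :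
    ∑ k ∈ univ.erase i, update x i y k j = ∑ k ∈ univ.erase i, x k j :=
  sum_congr rfl fun k hk => by rw [update_of_ne (ne_of_mem_erase hk)]

lemma cutil_eq_sum_bidPayoff (x : Fin n → Fin m → ℝ) (i : Fin n) :
    cutil v x i = ∑ j, bidPayoff (v i j) (∑ k ∈ univ.erase i, x k j) (x i j) := by
  unfold cutil
  refine sum_congr rfl fun j _ => ?_
  rw [bidPayoff, add_sum_erase univ (fun k => x k j) (mem_univ i)]

lemma cutil_update_update_sub (x : Fin n → Fin m → ℝ) (i : Fin n) (j : Fin m) (t : ℝ) :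
    cutil v (update x i (update (x i) j t)) i - cutil v x i =
      bidPayoff (v i j) (∑ k ∈ univ.erase i, x k j) t -
        bidPayoff (v i j) (∑ k ∈ univ.erase i, x k j) (x i j) := by
  rw [cutil_eq_sum_bidPayoff, cutil_eq_sum_bidPayoff, ← sum_sub_distrib,
    sum_eq_single j (fun j' _ hj' => ?_) (by simp)]
  · simp only [sum_erase_update_apply, update_self]
  · simp only [sum_erase_update_apply, update_self, update_of_ne hj', sub_self]

namespace IsPureNashEq

variable {v} {x : Fin n → Fin m → ℝ}

lemma bidPayoff_le (hx : IsPureNashEq v x) (i : Fin n) (j : Fin m) {t : ℝ} (ht : 0 ≤ t) :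
    bidPayoff (v i j) (∑ k ∈ univ.erase i, x k j) t ≤
      bidPayoff (v i j) (∑ k ∈ univ.erase i, x k j) (x i j) := by
  have hy : ∀ j', 0 ≤ update (x i) j t j' := by
    intro j'
    rcases eq_or_ne j' j with rfl | h
    · simpa using ht
    · simpa [update_of_ne h] using hx.1 i j'
  have := cutil_update_update_sub v x i j t
  linarith [hx.2 i _ hy]

lemma eq_zero_of_val_eq_zero (hx : IsPureNashEq v x) {i : Fin n} {j : Fin m}
    (hv : v i j = 0) : x i j = 0 := by
  have := hx.bidPayoff_le i j le_rfl
  rw [hv, bidPayoff_zero_left, bidPayoff_zero_left] at this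
  linarith [hx.1 i j]

lemma exists_ne_pos_of_val_pos (hx : IsPureNashEq v x) {i : Fin n} {j : Fin m}
    (hv : 0 < v i j) : ∃ k ≠ i, 0 < x k j := by
  by_contra! hnone
  have hothers : ∑ k ∈ univ.erase i, x k j = 0 :=
    sum_eq_zero fun k hk => (hnone k (ne_of_mem_erase hk)).antisymm (hx.1 k j)
  obtain ⟨t, ht, hgt⟩ := exists_bidPayoff_uncontested_gt hv (hx.1 i j)
  have := hx.bidPayoff_le i j ht
  rw [hothers] at this
  linarith

end IsPureNashEq

end Auction

/-- The two-player, two-item Chinese auction with costly continuous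
budgets and valuations `v₁ = (1,0)`, `v₂ = (1,1)` has no pure Nash equilibrium. -/
theorem stmt14 :
    ¬ ∃ x : Fin 2 → Fin 2 → ℝ,
      (∀ i j, 0 ≤ x i j) ∧
      (∀ i : Fin 2, ∀ y : Fin 2 → ℝ, (∀ j, 0 ≤ y j) →
        cutil ![![1, 0], ![1, 1]] (Function.update x i y) i ≤
          cutil ![![1, 0], ![1, 1]] x i) := by
  rintro ⟨x, hx⟩
  have hx : IsPureNashEq ![![1, 0], ![1, 1]] x := hx
  have hzero : x 0 1 = 0 := hx.eq_zero_of_val_eq_zero (by simp)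
  obtain ⟨k, hk, hpos⟩ := hx.exists_ne_pos_of_val_pos (i := 1) (j := 1) (by simp)
  fin_cases k
  · exact hpos.ne' hzero
  · exact hk rfl
end

section
/- Consider a Chinese auction with costly continuous budgets, arbitrary (possibly asymmetric, possibly zero) valuations v_{i,j} ≥ 0, in which the auctioneer places a ticket of weight Δ_j > 0 in the basket of each item j, so that the utility of player i at profile x is u_i(x) = Σ_{j=1}^m ((x_{i,j}/(Δ_j + Σ_{k=1}^n x_{k,j})) v_{i,j} − x_{i,j}), and each player i's strategy space is S_i = { y ∈ ℝ^m : 0 ≤ y_j ≤ v_{i,j} for all j }. Then this game has a pure Nash equilibrium. -/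
/-!
Items decouple, and on a single item the payoff `t ↦ t / (D + t) * w - t` of a player with
value `w`, facing opponent mass `D > 0` (auctioneer's ticket included), is maximised at
`t = max 0 (√(w D) - D)`. Parametrised by the resulting total mass `T = D + t` instead of by `D`,
this best response is `max 0 (T (w - T) / w)`, which is continuous in `T`. By the intermediate
value theorem each item has a total mass `T` reproduced by everybody's best response to it,
`Δ + ∑ᵢ max 0 (T (vᵢ - T) / vᵢ) = T`, and playing those best responses is an equilibrium.
-/

/-- Utility of player `i` in a Chinese auction with costly budgets in which the
auctioneer has placed a ticket of weight `Δ j > 0` in the basket of each item `j`. -/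
noncomputable def cutilAuc {n m : ℕ} (v : Fin n → Fin m → ℝ) (Δ : Fin m → ℝ)
    (x : Fin n → Fin m → ℝ) (i : Fin n) : ℝ :=
  ∑ j, ((x i j / (Δ j + ∑ k, x k j)) * v i j - x i j)

namespace ChineseAuction

noncomputable def itemPayoff (w D t : ℝ) : ℝ := t / (D + t) * w - t

noncomputable def ticketMass (w T : ℝ) : ℝ := max 0 (T * (w - T) / w)

lemma ticketMass_nonneg (w T : ℝ) : 0 ≤ ticketMass w T := le_max_left _ _

lemma ticketMass_le {w T : ℝ} (hw : 0 ≤ w) (hT : 0 ≤ T) : ticketMass w T ≤ w := by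
  refine max_le hw ?_
  rcases hw.eq_or_lt with rfl | hw
  · simp
  · rw [div_le_iff₀ hw]
    nlinarith [sq_nonneg (w - T)]

lemma ticketMass_eq_zero_of_le {w T : ℝ} (hw : 0 ≤ w) (hT : 0 ≤ T) (hwT : w ≤ T) :
    ticketMass w T = 0 :=
  max_eq_left (div_nonpos_of_nonpos_of_nonneg (mul_nonpos_of_nonneg_of_nonpos hT (by linarith)) hw)

lemma ticketMass_eq_of_lt {w T : ℝ} (hT : 0 ≤ T) (hTw : T < w) :
    ticketMass w T = T * (w - T) / w :=
  max_eq_right (div_nonneg (mul_nonneg hT (by linarith)) (by linarith))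

lemma continuous_ticketMass (w : ℝ) : Continuous (ticketMass w) :=
  continuous_const.max ((continuous_id.mul (continuous_const.sub continuous_id)).div_const _)

lemma exists_add_sum_ticketMass_eq {ι : Type*} [Fintype ι] (w : ι → ℝ) (hw : ∀ i, 0 ≤ w i)
    {Δ : ℝ} (hΔ : 0 ≤ Δ) : ∃ T, Δ + ∑ i, ticketMass (w i) T = T := by
  set f : ℝ → ℝ := fun T => Δ + ∑ i, ticketMass (w i) T - T
  have hf : Continuous f :=
    (continuous_const.add (continuous_finsetSum _ fun i _ => continuous_ticketMass (w i))).sub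
      continuous_id
  have hΔB : Δ ≤ Δ + ∑ i, w i := le_add_of_nonneg_right (Finset.sum_nonneg fun i _ => hw i)
  have hfΔ : 0 ≤ f Δ := by
    simpa [f] using Finset.sum_nonneg fun i _ => ticketMass_nonneg (w i) Δ
  have hfB : f (Δ + ∑ i, w i) ≤ 0 := by
    have := Finset.sum_le_sum fun i (_ : i ∈ Finset.univ) =>
      ticketMass_le (T := Δ + ∑ i, w i) (hw i) (hΔ.trans hΔB)
    simp only [f]
    linarith
  obtain ⟨T, -, hT⟩ := intermediate_value_Icc' hΔB hf.continuousOn ⟨hfB, hfΔ⟩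
  exact ⟨T, by simp only [f] at hT; linarith⟩

lemma itemPayoff_zero (w D : ℝ) : itemPayoff w D 0 = 0 := by simp [itemPayoff]

lemma itemPayoff_nonpos {w D t : ℝ} (hD : 0 < D) (ht : 0 ≤ t) (hwD : w ≤ D) :
    itemPayoff w D t ≤ 0 := by
  rw [itemPayoff, div_mul_eq_mul_div, sub_nonpos, div_le_iff₀ (by linarith)]
  nlinarith

lemma itemPayoff_le_of_mul_eq_sq {w D T t : ℝ} (hD : 0 < D) (ht : 0 ≤ t)
    (hwD : w * D = T ^ 2) : itemPayoff w D t ≤ itemPayoff w D (T - D) := by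
  obtain rfl : w = T ^ 2 / D := by rw [eq_div_iff hD.ne', hwD]
  have hDt : 0 < D + t := by linarith
  have hgap : itemPayoff (T ^ 2 / D) D (T - D) - itemPayoff (T ^ 2 / D) D t
      = (T - D - t) ^ 2 / (D + t) := by
    simp only [itemPayoff, add_sub_cancel]
    field_simp
    ring
  linarith [div_nonneg (sq_nonneg (T - D - t)) hDt.le]

lemma itemPayoff_le_itemPayoff_ticketMass {w D T t : ℝ} (hw : 0 ≤ w) (hD : 0 < D)
    (hT : D + ticketMass w T = T) (ht : 0 ≤ t) :
    itemPayoff w D t ≤ itemPayoff w D (ticketMass w T) := by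
  have hTpos : 0 < T := by linarith [ticketMass_nonneg w T]
  rcases le_or_gt w T with hwT | hTw
  · rw [ticketMass_eq_zero_of_le hw hTpos.le hwT] at hT ⊢
    rw [itemPayoff_zero]
    exact itemPayoff_nonpos hD ht (by linarith)
  · have hψ := ticketMass_eq_of_lt hTpos.le hTw
    have hwD : w * D = T ^ 2 := by
      rw [show D = T - T * (w - T) / w by linarith]
      field_simp [(hTpos.trans hTw).ne']
      ring
    rw [show ticketMass w T = T - D by linarith]
    exact itemPayoff_le_of_mul_eq_sq hD ht hwD

lemma cutilAuc_eq_sum_itemPayoff {n m : ℕ} (v : Fin n → Fin m → ℝ) (Δ : Fin m → ℝ)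
    (x : Fin n → Fin m → ℝ) (i : Fin n) :
    cutilAuc v Δ x i
      = ∑ j, itemPayoff (v i j) (Δ j + ∑ k ∈ Finset.univ.erase i, x k j) (x i j) := by
  refine Finset.sum_congr rfl fun j _ => ?_
  rw [itemPayoff, add_assoc, Finset.sum_erase_add _ _ (Finset.mem_univ i)]

lemma cutilAuc_update_eq_sum_itemPayoff {n m : ℕ} (v : Fin n → Fin m → ℝ) (Δ : Fin m → ℝ)
    (x : Fin n → Fin m → ℝ) (i : Fin n) (y : Fin m → ℝ) :
    cutilAuc v Δ (Function.update x i y) i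
      = ∑ j, itemPayoff (v i j) (Δ j + ∑ k ∈ Finset.univ.erase i, x k j) (y j) := by
  rw [cutilAuc_eq_sum_itemPayoff]
  refine Finset.sum_congr rfl fun j _ => ?_
  rw [Function.update_self, Finset.sum_congr rfl fun k hk =>
    by rw [Function.update_of_ne (Finset.ne_of_mem_erase hk)]]

end ChineseAuction

open ChineseAuction in
/-- With arbitrary nonnegative (possibly asymmetric, possibly zero)
valuations and costly continuous budgets, if the auctioneer places a strictly positive
ticket `Δ j` in each basket and each player `i`'s strategy space is
`{y : 0 ≤ y j ≤ v i j for all j}`, then the game has a pure Nash equilibrium. -/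
theorem stmt15 {n m : ℕ}
    (v : Fin n → Fin m → ℝ) (hv : ∀ i j, 0 ≤ v i j)
    (Δ : Fin m → ℝ) (hΔ : ∀ j, 0 < Δ j) :
    ∃ x : Fin n → Fin m → ℝ,
      (∀ i j, 0 ≤ x i j ∧ x i j ≤ v i j) ∧
      (∀ i : Fin n, ∀ y : Fin m → ℝ, (∀ j, 0 ≤ y j ∧ y j ≤ v i j) →
        cutilAuc v Δ (Function.update x i y) i ≤ cutilAuc v Δ x i) := by
  choose T hT using fun j => exists_add_sum_ticketMass_eq (v · j) (hv · j) (hΔ j).le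
  have hTpos : ∀ j, 0 < T j := fun j =>
    (hT j).symm ▸
      add_pos_of_pos_of_nonneg (hΔ j) (Finset.sum_nonneg fun i _ => ticketMass_nonneg _ _)
  set x : Fin n → Fin m → ℝ := fun i j => ticketMass (v i j) (T j)
  refine ⟨x, fun i j => ⟨ticketMass_nonneg _ _, ticketMass_le (hv i j) (hTpos j).le⟩,
    fun i y hy => ?_⟩
  rw [cutilAuc_update_eq_sum_itemPayoff, cutilAuc_eq_sum_itemPayoff]
  refine Finset.sum_le_sum fun j _ => itemPayoff_le_itemPayoff_ticketMass (hv i j) ?_ ?_ (hy j).1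
  · exact add_pos_of_pos_of_nonneg (hΔ j) (Finset.sum_nonneg fun k _ => ticketMass_nonneg _ _)
  · rw [add_assoc, Finset.sum_erase_add _ _ (Finset.mem_univ i)]
    exact hT j
end
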